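/- As an identity of formal power series in q, 256q⁸P(q³)⁸X(−q³)⁸ − 2048q⁸P(q³)⁷X(−q³)⁷Φ(−q⁹)Ψ(q⁹) + 6400q⁸P(q³)⁶X(−q³)⁶Φ(−q⁹)²Ψ(q⁹)² − 8192q⁸P(q³)⁵X(−q³)⁵Φ(−q⁹)³Ψ(q⁹)³ + 5776q⁸P(q³)⁴X(−q³)⁴Φ(−q⁹)⁴Ψ(q⁹)⁴ − 2048q⁸P(q³)³X(−q³)³Φ(−q⁹)⁵Ψ(q⁹)⁵ + 400q⁸P(q³)²X(−q³)²Φ(−q⁹)⁶Ψ(q⁹)⁶ − 32q⁸P(q³)X(−q³)Φ(−q⁹)⁷Ψ(q⁹)⁷ + q⁸Φ(−q⁹)⁸Ψ(q⁹)⁸ = 19·3³·q⁸·(q⁹;q⁹)_∞⁸ (q¹⁸;q¹⁸)_∞⁸. -/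

import Mathlib

open PowerSeries

/-- The infinite product `(q^j; q^k)_∞ = ∏_{n ≥ 0} (1 - q^(j + k*n))` as a formal power
series over `ℤ`: for `j ≥ 1` its `n`-th coefficient is the (stable) `n`-th coefficient
of the partial products `∏_{m < n+1} (1 - q^(j + k*m))`. -/
noncomputable def qp (j k : ℕ) : PowerSeries ℤ :=
  PowerSeries.mk fun n =>
    PowerSeries.coeff n
      (∏ m ∈ Finset.range (n + 1), (1 - (PowerSeries.X : PowerSeries ℤ) ^ (j + k * m)))

/-- Substitution of `q^k` for `q` in a formal power series (for `k ≥ 1`). -/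
noncomputable def substQ (k : ℕ) (f : PowerSeries ℤ) : PowerSeries ℤ :=
  PowerSeries.mk fun n => if k ∣ n then PowerSeries.coeff (n / k) f else 0

/-- `Φ(-q) = (q;q)_∞² / (q²;q²)_∞`. -/
noncomputable def Phi : PowerSeries ℤ := qp 1 1 ^ 2 * Ring.inverse (qp 2 2)

/-- `Ψ(q) = (q²;q²)_∞ / (q;q²)_∞`. -/
noncomputable def Psi : PowerSeries ℤ := qp 2 2 * Ring.inverse (qp 1 2)

/-- `P(q) = (q²;q⁶)_∞ (q⁴;q⁶)_∞ (q³;q³)_∞² / (q;q)_∞`. -/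
noncomputable def Pq : PowerSeries ℤ := qp 2 6 * qp 4 6 * qp 3 3 ^ 2 * Ring.inverse (qp 1 1)

/-- `X(-q) = (q;q)_∞ (q⁶;q⁶)_∞² / ((q²;q²)_∞ (q³;q³)_∞)`. -/
noncomputable def Xq : PowerSeries ℤ := qp 1 1 * qp 6 6 ^ 2 * Ring.inverse (qp 2 2 * qp 3 3)

/-- `Φ(-q³)` -/ noncomputable def Phi3 : PowerSeries ℤ := substQ 3 Phi
/-- `Φ(-q⁹)` -/ noncomputable def Phi9 : PowerSeries ℤ := substQ 9 Phi
/-- `Ψ(q³)` -/ noncomputable def Psi3 : PowerSeries ℤ := substQ 3 Psi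
/-- `Ψ(q⁹)` -/ noncomputable def Psi9 : PowerSeries ℤ := substQ 9 Psi
/-- `P(q³)` -/ noncomputable def P3 : PowerSeries ℤ := substQ 3 Pq
/-- `X(-q³)` -/ noncomputable def X3 : PowerSeries ℤ := substQ 3 Xq

/-!
Both building blocks of the left-hand side collapse to the same product:
`P(q) X(-q) = (q³;q³)_∞ (q⁶;q⁶)_∞` and `Φ(-q) Ψ(q) = (q;q)_∞ (q²;q²)_∞`, each obtained by
splitting `(q^j;q^k)_∞` into the residue classes of its index
(`(q;q²)(q²;q²) = (q;q)` and `(q²;q⁶)(q⁴;q⁶)(q⁶;q⁶) = (q²;q²)`). Substituting `q³`, resp. `q⁹`,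
both `P(q³) X(-q³)` and `Φ(-q⁹) Ψ(q⁹)` equal `e = (q⁹;q⁹)_∞ (q¹⁸;q¹⁸)_∞`. The left-hand side is
`q⁸` times a binary octic form in these two products, so it equals `q⁸ e⁸` times the sum of the
coefficients of the form, `513 = 19 · 3³`.
-/

section XAdic

variable {R : Type*} [CommRing R]

lemma coeff_mul_one_sub_X_pow_of_lt (f : PowerSeries R) {n e : ℕ}
    (h : n < e) : coeff n (f * (1 - X ^ e)) = coeff n f := by
  rw [mul_one_sub, map_sub, coeff_mul_X_pow', if_neg (by omega), sub_zero]

lemma mk_span_X_pow_eq_iff {N : ℕ} {f g : PowerSeries R} :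
    Ideal.Quotient.mk (Ideal.span {X ^ N}) f = Ideal.Quotient.mk (Ideal.span {X ^ N}) g ↔
      ∀ m < N, coeff m f = coeff m g := by
  simp only [Ideal.Quotient.mk_eq_mk_iff_sub_mem, Ideal.mem_span_singleton, X_pow_dvd_iff,
    map_sub, sub_eq_zero]

lemma eq_of_forall_mk_span_X_pow_eq {f g : PowerSeries R}
    (h : ∀ N, Ideal.Quotient.mk (Ideal.span {X ^ N}) f =
      Ideal.Quotient.mk (Ideal.span {X ^ N}) g) :
    f = g := by
  ext n
  exact mk_span_X_pow_eq_iff.mp (h (n + 1)) n (Nat.lt_succ_self n)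

end XAdic

noncomputable def qpPartial (j k N : ℕ) : PowerSeries ℤ :=
  ∏ m ∈ Finset.range N, (1 - (X : PowerSeries ℤ) ^ (j + k * m))

lemma qpPartial_succ (j k N : ℕ) :
    qpPartial j k (N + 1) = qpPartial j k N * (1 - X ^ (j + k * N)) :=
  Finset.prod_range_succ _ _

lemma coeff_qp_eq_coeff_qpPartial_succ (j k n : ℕ) :
    coeff n (qp j k) = coeff n (qpPartial j k (n + 1)) :=
  coeff_mk _ _

lemma qpPartial_add (j k N M : ℕ) :
    qpPartial j k (N + M) =
      qpPartial j k N * ∏ m ∈ Finset.range M, (1 - X ^ (j + k * (N + m))) :=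
  Finset.prod_range_add _ _ _

lemma coeff_qpPartial_of_le {j k n N M : ℕ} (hk : 0 < k) (hnN : n < N) (hNM : N ≤ M) :
    coeff n (qpPartial j k M) = coeff n (qpPartial j k N) := by
  induction M, hNM using Nat.le_induction with
  | base => rfl
  | succ M hNM ih =>
    have hM : M ≤ k * M := Nat.le_mul_of_pos_left M hk
    rw [qpPartial_succ, coeff_mul_one_sub_X_pow_of_lt _ (by omega), ih]

lemma coeff_qp {j k n N : ℕ} (hk : 0 < k) (hn : n < N) :
    coeff n (qp j k) = coeff n (qpPartial j k N) := by
  rw [coeff_qp_eq_coeff_qpPartial_succ, coeff_qpPartial_of_le hk (Nat.lt_succ_self n) hn]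

lemma isUnit_qp {j : ℕ} (hj : 0 < j) (k : ℕ) : IsUnit (qp j k) := by
  rw [isUnit_iff_constantCoeff, ← coeff_zero_eq_constantCoeff_apply,
    coeff_qp_eq_coeff_qpPartial_succ]
  simp [qpPartial, hj.ne']

lemma mk_span_X_pow_qp {j k N M : ℕ} (hk : 0 < k) (hNM : N ≤ M) :
    Ideal.Quotient.mk (Ideal.span {X ^ N}) (qp j k) =
      Ideal.Quotient.mk (Ideal.span {X ^ N}) (qpPartial j k M) :=
  mk_span_X_pow_eq_iff.mpr fun _ hm => coeff_qp hk (by omega)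

lemma prod_qpPartial_residues (j k d N : ℕ) :
    ∏ r ∈ Finset.range d, qpPartial (j + k * r) (d * k) N = qpPartial j k (d * N) := by
  induction N with
  | zero => simp [qpPartial]
  | succ N ih =>
    simp_rw [qpPartial_succ, Finset.prod_mul_distrib]
    rw [ih, Nat.mul_succ, qpPartial_add]
    refine congrArg _ (Finset.prod_congr rfl fun r _ => ?_)
    ring_nf

/-- Identities of infinite products are checked modulo every `X ^ N`, where they become
identities of partial products. -/
lemma prod_qp_residues {j k d : ℕ} (hk : 0 < k) (hd : 0 < d) :
    ∏ r ∈ Finset.range d, qp (j + k * r) (d * k) = qp j k := by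
  refine eq_of_forall_mk_span_X_pow_eq fun N => ?_
  rw [map_prod, Finset.prod_congr rfl fun r _ => mk_span_X_pow_qp (Nat.mul_pos hd hk) le_rfl,
    ← map_prod, prod_qpPartial_residues, mk_span_X_pow_qp hk (Nat.le_mul_of_pos_left N hd)]

lemma qp_one_two_mul_qp_two_two : qp 1 2 * qp 2 2 = qp 1 1 := by
  have h := prod_qp_residues (j := 1) (k := 1) (d := 2) one_pos two_pos
  rwa [Finset.prod_range_succ, Finset.prod_range_succ, Finset.prod_range_zero, one_mul] at h

lemma qp_two_six_mul_qp_four_six_mul_qp_six_six : qp 2 6 * qp 4 6 * qp 6 6 = qp 2 2 := by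
  have h := prod_qp_residues (j := 2) (k := 2) (d := 3) two_pos three_pos
  rwa [Finset.prod_range_succ, Finset.prod_range_succ, Finset.prod_range_succ,
    Finset.prod_range_zero, one_mul] at h

lemma substQ_eq_expand {k : ℕ} (hk : k ≠ 0) (f : PowerSeries ℤ) :
    substQ k f = expand k hk f := by
  ext n
  rw [substQ, coeff_mk, coeff_expand]

lemma expand_qpPartial {k : ℕ} (hk : k ≠ 0) (j l N : ℕ) :
    expand k hk (qpPartial j l N) = qpPartial (k * j) (k * l) N := by
  simp only [qpPartial, map_prod, map_sub, map_one, map_pow, expand_X, ← pow_mul, mul_add,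
    mul_assoc]

lemma expand_qp {k l : ℕ} (hk : k ≠ 0) (hl : 0 < l) (j : ℕ) :
    expand k hk (qp j l) = qp (k * j) (k * l) := by
  ext n
  have hdiv : n / k < n + 1 := Nat.lt_succ_of_le (Nat.div_le_self n k)
  rw [coeff_qp (Nat.mul_pos (Nat.pos_of_ne_zero hk) hl) (Nat.lt_succ_self n),
    ← expand_qpPartial hk, coeff_expand, coeff_expand, coeff_qp hl hdiv]

lemma Phi_mul_Psi : Phi * Psi = qp 1 1 * qp 2 2 := by
  have h22 := Ring.inverse_mul_cancel _ (isUnit_qp two_pos 2)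
  have h12 := Ring.mul_inverse_cancel _ (isUnit_qp one_pos 2)
  rw [Phi, Psi, ← qp_one_two_mul_qp_two_two]
  linear_combination (qp 1 2 * qp 2 2 ^ 3 * Ring.inverse (qp 2 2)) * h12 +
    (qp 1 2 * qp 2 2 ^ 2) * h22

lemma Pq_mul_Xq : Pq * Xq = qp 3 3 * qp 6 6 := by
  set w := Ring.inverse (qp 2 2 * qp 3 3)
  have hw : qp 2 2 * qp 3 3 * w = 1 :=
    Ring.mul_inverse_cancel _ ((isUnit_qp two_pos 2).mul (isUnit_qp three_pos 3))
  have h11 := Ring.inverse_mul_cancel _ (isUnit_qp one_pos 1)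
  rw [Pq, Xq]
  linear_combination (qp 2 6 * qp 4 6 * qp 3 3 ^ 2 * qp 6 6 ^ 2 * w) * h11 +
    (qp 3 3 ^ 2 * qp 6 6 * w) * qp_two_six_mul_qp_four_six_mul_qp_six_six + (qp 3 3 * qp 6 6) * hw

lemma P3_mul_X3 : P3 * X3 = qp 9 9 * qp 18 18 := by
  rw [P3, X3, substQ_eq_expand three_ne_zero, substQ_eq_expand three_ne_zero, ← map_mul,
    Pq_mul_Xq, map_mul, expand_qp _ three_pos, expand_qp _ (by norm_num)]
  norm_num

lemma Phi9_mul_Psi9 : Phi9 * Psi9 = qp 9 9 * qp 18 18 := by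
  rw [Phi9, Psi9, substQ_eq_expand (by norm_num), substQ_eq_expand (by norm_num), ← map_mul,
    Phi_mul_Psi, map_mul, expand_qp _ one_pos, expand_qp _ two_pos]
  norm_num

def octicForm {R : Type*} [CommRing R] (t s : R) : R :=
  256 * t ^ 8 - 2048 * t ^ 7 * s + 6400 * t ^ 6 * s ^ 2 - 8192 * t ^ 5 * s ^ 3 +
    5776 * t ^ 4 * s ^ 4 - 2048 * t ^ 3 * s ^ 5 + 400 * t ^ 2 * s ^ 6 - 32 * t * s ^ 7 + s ^ 8

lemma octicForm_self {R : Type*} [CommRing R] (e : R) : octicForm e e = 19 * 3 ^ 3 * e ^ 8 := by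
  unfold octicForm
  ring

theorem C_eval :
    256 * (PowerSeries.X : PowerSeries ℤ) ^ 8 * P3 ^ 8 * X3 ^ 8 - 2048 * (PowerSeries.X : PowerSeries ℤ) ^ 8 * P3 ^ 7 * X3 ^ 7 * Phi9 * Psi9 + 6400 * (PowerSeries.X : PowerSeries ℤ) ^ 8 * P3 ^ 6 * X3 ^ 6 * Phi9 ^ 2 * Psi9 ^ 2 - 8192 * (PowerSeries.X : PowerSeries ℤ) ^ 8 * P3 ^ 5 * X3 ^ 5 * Phi9 ^ 3 * Psi9 ^ 3 + 5776 * (PowerSeries.X : PowerSeries ℤ) ^ 8 * P3 ^ 4 * X3 ^ 4 * Phi9 ^ 4 * Psi9 ^ 4 - 2048 * (PowerSeries.X : PowerSeries ℤ) ^ 8 * P3 ^ 3 * X3 ^ 3 * Phi9 ^ 5 * Psi9 ^ 5 + 400 * (PowerSeries.X : PowerSeries ℤ) ^ 8 * P3 ^ 2 * X3 ^ 2 * Phi9 ^ 6 * Psi9 ^ 6 - 32 * (PowerSeries.X : PowerSeries ℤ) ^ 8 * P3 * X3 * Phi9 ^ 7 * Psi9 ^ 7 + (PowerSeries.X : PowerSeries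 ℤ) ^ 8 * Phi9 ^ 8 * Psi9 ^ 8 = 19 * 3 ^ 3 * (PowerSeries.X : PowerSeries ℤ) ^ 8 * (qp 9 9 ^ 8 * qp 18 18 ^ 8) := by
  calc _ = X ^ 8 * octicForm (P3 * X3) (Phi9 * Psi9) := by
        unfold octicForm
        ring
    _ = X ^ 8 * octicForm (qp 9 9 * qp 18 18) (qp 9 9 * qp 18 18) := by
        rw [P3_mul_X3, Phi9_mul_Psi9]
    _ = _ := by
        rw [octicForm_self]
        ring
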